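/- arXiv:2510.19998 — 2 statements merged into one kernel-verified Lean document; each statement's English description precedes it below -/
import Mathlib

section
/- Let (X,d) be a proper Polish metric space (every closed bounded subset of X is compact), p ≥ 1, and let G be a topological group acting on X by isometries such that the action is continuous and proper. Then for every μ, ν ∈ P_p(X) there exists g₀ ∈ G attaining the infimum: W_p((g₀)_#μ, ν) = inf_{g ∈ G} W_p(g_#μ, ν). -/
open MeasureTheory ENNReal Set

noncomputable section

/-- The set of admissible couplings of two measures. -/
def Adm {X : Type*} [MeasurableSpace X] (μ ν : Measure X) : Set (Measure (X × X)) :=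
  {π | IsProbabilityMeasure π ∧ π.map Prod.fst = μ ∧ π.map Prod.snd = ν}

/-- The `p`-th Wasserstein distance. -/
def Wp {X : Type*} [MeasurableSpace X] [PseudoEMetricSpace X] (p : ℝ) (μ ν : Measure X) :
    ℝ≥0∞ :=
  (⨅ π ∈ Adm μ ν, ∫⁻ z : X × X, edist z.1 z.2 ^ p ∂π) ^ (1 / p)

/-- Finite `p`-th moment. -/
def HasFinitePMoment {X : Type*} [MeasurableSpace X] [PseudoEMetricSpace X] (p : ℝ)
    (μ : Measure X) : Prop :=
  ∃ x₀ : X, ∫⁻ x, edist x x₀ ^ p ∂μ ≠ ⊤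

/-!
The function `f g = W_p(g_#μ, ν)` is continuous and tends to `∞` as `g` leaves the compact sets
of `G`, so it attains its infimum.

Continuity: transporting `h_#μ` to `g_#μ` along `x ↦ g h⁻¹ x` shows that `f g` and `f h` differ by
at most `(∫ d(g x, h x)^p dμ)^{1/p}`. This tends to `0` as `g → h`, because `g ↦ (g • ·)` converges
uniformly on the compact balls of `X` while the `p`-th moment of `μ` has small tails.

Coercivity: if `μ(Bᶜ) + ν(Bᶜ) < 1` for a ball `B = B(x₀, R)`, every coupling of `g_#μ` and `ν`
moves the mass `1 - μ(Bᶜ) - ν(Bᶜ) > 0` by at least `d(g x₀, x₀) - 2R`, and properness of the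
action makes `d(g x₀, x₀)` tend to `∞`.
-/

open Filter Topology Metric

section Couplings

variable {X : Type*} [MeasurableSpace X] {μ ν : Measure X}

lemma prod_mem_Adm [IsProbabilityMeasure μ] [IsProbabilityMeasure ν] : μ.prod ν ∈ Adm μ ν :=
  ⟨inferInstance, by simp, by simp⟩

lemma map_prodMap_mem_Adm {π : Measure (X × X)} (hπ : π ∈ Adm μ ν) {φ : X → X}
    (hφ : Measurable φ) : π.map (Prod.map φ id) ∈ Adm (μ.map φ) ν := by
  obtain ⟨hprob, hfst, hsnd⟩ := hπ
  have hmap : Measurable (Prod.map φ (id : X → X)) := hφ.prodMap measurable_id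
  refine ⟨Measure.isProbabilityMeasure_map hmap.aemeasurable, ?_, ?_⟩
  · rw [Measure.map_map measurable_fst hmap, ← hfst, Measure.map_map hφ measurable_fst]
    rfl
  · rwa [Measure.map_map measurable_snd hmap]

lemma measure_compl_prod_le_of_mem_Adm {π : Measure (X × X)} (hπ : π ∈ Adm μ ν) {s t : Set X}
    (hs : MeasurableSet s) (ht : MeasurableSet t) : π (s ×ˢ t)ᶜ ≤ μ sᶜ + ν tᶜ := by
  rw [compl_prod_eq_union, prod_univ, univ_prod, ← hπ.2.1, ← hπ.2.2,
    Measure.map_apply measurable_fst hs.compl, Measure.map_apply measurable_snd ht.compl]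
  exact measure_union_le _ _

lemma lintegral_fst_of_mem_Adm {π : Measure (X × X)} (hπ : π ∈ Adm μ ν) {f : X → ℝ≥0∞}
    (hf : Measurable f) : ∫⁻ z, f z.1 ∂π = ∫⁻ x, f x ∂μ := by
  rw [← hπ.2.1, lintegral_map hf measurable_fst]

lemma lintegral_snd_of_mem_Adm {π : Measure (X × X)} (hπ : π ∈ Adm μ ν) {f : X → ℝ≥0∞}
    (hf : Measurable f) : ∫⁻ z, f z.2 ∂π = ∫⁻ x, f x ∂ν := by
  rw [← hπ.2.2, lintegral_map hf measurable_snd]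

end Couplings

section Wasserstein

variable {X : Type*} [MeasurableSpace X] [PseudoEMetricSpace X] {p : ℝ} {μ ν : Measure X}

lemma Wp_le_of_mem_Adm {π : Measure (X × X)} (hπ : π ∈ Adm μ ν) (hp : 0 ≤ p) :
    Wp p μ ν ≤ (∫⁻ z, edist z.1 z.2 ^ p ∂π) ^ (1 / p) :=
  ENNReal.rpow_le_rpow (biInf_le _ hπ) (one_div_nonneg.mpr hp)

lemma Wp_eq_iInf (hp : 0 < p) :
    Wp p μ ν = ⨅ π ∈ Adm μ ν, (∫⁻ z, edist z.1 z.2 ^ p ∂π) ^ (1 / p) := by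
  let e := ENNReal.orderIsoRpow (1 / p) (one_div_pos.mpr hp)
  change e _ = ⨅ π ∈ Adm μ ν, e _
  simp only [e.map_iInf]

lemma mul_rpow_le_Wp {s t : Set X} (hs : MeasurableSet s) (ht : MeasurableSet t) {τ : ℝ≥0∞}
    (hst : ∀ x ∈ s, ∀ y ∈ t, τ ≤ edist x y) (hp : 0 < p) :
    τ * (1 - (μ sᶜ + ν tᶜ)) ^ (1 / p) ≤ Wp p μ ν := by
  have hcost : ∀ π ∈ Adm μ ν, τ ^ p * (1 - (μ sᶜ + ν tᶜ)) ≤ ∫⁻ z, edist z.1 z.2 ^ p ∂π := by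
    intro π hπ
    have := hπ.1
    have hst' : MeasurableSet (s ×ˢ t) := hs.prod ht
    calc τ ^ p * (1 - (μ sᶜ + ν tᶜ)) ≤ τ ^ p * π (s ×ˢ t) := by
          gcongr
          calc 1 - (μ sᶜ + ν tᶜ) ≤ 1 - π (s ×ˢ t)ᶜ :=
                tsub_le_tsub_left (measure_compl_prod_le_of_mem_Adm hπ hs ht) 1
            _ = π (s ×ˢ t) := by
                rw [prob_compl_eq_one_sub hst', ENNReal.sub_sub_cancel one_ne_top prob_le_one]
      _ = ∫⁻ _ in s ×ˢ t, τ ^ p ∂π := (setLIntegral_const _ _).symm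
      _ ≤ ∫⁻ z in s ×ˢ t, edist z.1 z.2 ^ p ∂π :=
          setLIntegral_mono' hst' fun z hz => ENNReal.rpow_le_rpow (hst _ hz.1 _ hz.2) hp.le
      _ ≤ ∫⁻ z, edist z.1 z.2 ^ p ∂π := setLIntegral_le_lintegral _ _
  calc τ * (1 - (μ sᶜ + ν tᶜ)) ^ (1 / p) = (τ ^ p * (1 - (μ sᶜ + ν tᶜ))) ^ (1 / p) := by
        rw [ENNReal.mul_rpow_of_nonneg _ _ (by positivity), ← ENNReal.rpow_mul,
          mul_one_div_cancel hp.ne', ENNReal.rpow_one]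
    _ ≤ Wp p μ ν := ENNReal.rpow_le_rpow (le_iInf₂ hcost) (by positivity)

variable [OpensMeasurableSpace X] [SecondCountableTopology X]

theorem Wp_map_le (hp : 1 ≤ p) {φ : X → X} (hφ : Measurable φ) :
    Wp p (μ.map φ) ν ≤ (∫⁻ x, edist (φ x) x ^ p ∂μ) ^ (1 / p) + Wp p μ ν := by
  have hp0 : 0 < p := by linarith
  rw [Wp_eq_iInf (μ := μ) hp0]
  simp only [ENNReal.add_iInf]
  refine le_iInf₂ fun π hπ => ?_
  have hdist : Measurable fun z : X × X => edist (φ z.1) z.1 :=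
    (hφ.comp measurable_fst).edist measurable_fst
  calc Wp p (μ.map φ) ν ≤ (∫⁻ z, edist z.1 z.2 ^ p ∂π.map (Prod.map φ id)) ^ (1 / p) :=
        Wp_le_of_mem_Adm (map_prodMap_mem_Adm hπ hφ) hp0.le
    _ = (∫⁻ z, edist (φ z.1) z.2 ^ p ∂π) ^ (1 / p) := by
        rw [lintegral_map (measurable_edist.pow_const p) (hφ.prodMap measurable_id)]
        rfl
    _ ≤ (∫⁻ z, (edist (φ z.1) z.1 + edist z.1 z.2) ^ p ∂π) ^ (1 / p) := by
        gcongr with z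
        exact edist_triangle _ _ _
    _ ≤ (∫⁻ z, edist (φ z.1) z.1 ^ p ∂π) ^ (1 / p) + (∫⁻ z, edist z.1 z.2 ^ p ∂π) ^ (1 / p) :=
        ENNReal.lintegral_Lp_add_le hdist.aemeasurable measurable_edist.aemeasurable hp
    _ = (∫⁻ x, edist (φ x) x ^ p ∂μ) ^ (1 / p) + (∫⁻ z, edist z.1 z.2 ^ p ∂π) ^ (1 / p) := by
        rw [lintegral_fst_of_mem_Adm hπ ((hφ.edist measurable_id').pow_const p)]

end Wasserstein

section Moments

variable {X : Type*} [MeasurableSpace X] [PseudoMetricSpace X] {p : ℝ} {μ ν : Measure X}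

lemma HasFinitePMoment.lintegral_edist_rpow_ne_top [IsFiniteMeasure μ] (hp : 1 ≤ p)
    (hμ : HasFinitePMoment p μ) (y : X) : ∫⁻ x, edist x y ^ p ∂μ ≠ ⊤ := by
  obtain ⟨x₀, hx₀⟩ := hμ
  have h2 : (2 : ℝ≥0∞) ^ (p - 1) ≠ ⊤ := ENNReal.rpow_ne_top_of_nonneg (by linarith) (by simp)
  refine ne_of_lt ?_
  calc ∫⁻ x, edist x y ^ p ∂μ ≤ ∫⁻ x, 2 ^ (p - 1) * (edist x x₀ ^ p + edist x₀ y ^ p) ∂μ :=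
        lintegral_mono fun x => (ENNReal.rpow_le_rpow (edist_triangle _ _ _) (by linarith)).trans
          (ENNReal.rpow_add_le_mul_rpow_add_rpow _ _ hp)
    _ = 2 ^ (p - 1) * (∫⁻ x, edist x x₀ ^ p ∂μ + edist x₀ y ^ p * μ univ) := by
        rw [lintegral_const_mul' _ _ h2, lintegral_add_right _ measurable_const, lintegral_const]
    _ < ⊤ := by finiteness

variable [OpensMeasurableSpace X] in
theorem Wp_ne_top [IsProbabilityMeasure μ] [IsProbabilityMeasure ν] (hp : 1 ≤ p)
    (hμ : HasFinitePMoment p μ) (hν : HasFinitePMoment p ν) : Wp p μ ν ≠ ⊤ := by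
  obtain ⟨y, hy⟩ := hν
  have h2 : (2 : ℝ≥0∞) ^ (p - 1) ≠ ⊤ := ENNReal.rpow_ne_top_of_nonneg (by linarith) (by simp)
  have hedist : Measurable fun x : X => edist x y ^ p := measurable_edist_left.pow_const p
  have hfst : Measurable fun z : X × X => edist z.1 y ^ p := hedist.comp measurable_fst
  have hcost : ∫⁻ z, edist z.1 z.2 ^ p ∂μ.prod ν ≠ ⊤ := by
    refine ne_of_lt ?_
    calc ∫⁻ z, edist z.1 z.2 ^ p ∂μ.prod ν
          ≤ ∫⁻ z, 2 ^ (p - 1) * (edist z.1 y ^ p + edist z.2 y ^ p) ∂μ.prod ν :=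
          lintegral_mono fun z =>
            (ENNReal.rpow_le_rpow (edist_triangle_right _ _ _) (by linarith)).trans
              (ENNReal.rpow_add_le_mul_rpow_add_rpow _ _ hp)
      _ = 2 ^ (p - 1) * (∫⁻ x, edist x y ^ p ∂μ + ∫⁻ x, edist x y ^ p ∂ν) := by
          rw [lintegral_const_mul' _ _ h2, lintegral_add_left hfst,
            lintegral_fst_of_mem_Adm prod_mem_Adm hedist,
            lintegral_snd_of_mem_Adm prod_mem_Adm hedist]
      _ < ⊤ := by
          have := hμ.lintegral_edist_rpow_ne_top hp y
          finiteness
  exact ne_top_of_le_ne_top (ENNReal.rpow_ne_top_of_nonneg (by positivity) hcost)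
    (Wp_le_of_mem_Adm prod_mem_Adm (by linarith))

end Moments

lemma tendsto_measure_compl_closedBall {X : Type*} [MeasurableSpace X] [PseudoMetricSpace X]
    [OpensMeasurableSpace X] (μ : Measure X) [IsFiniteMeasure μ] (x : X) :
    Tendsto (fun R : ℝ => μ (closedBall x R)ᶜ) atTop (𝓝 0) := by
  have h := tendsto_measure_iInter_atTop (μ := μ) (s := fun R : ℝ => (closedBall x R)ᶜ)
    (fun _ => measurableSet_closedBall.compl.nullMeasurableSet)
    (fun _ _ hRR' => compl_subset_compl.2 (closedBall_subset_closedBall hRR'))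
    ⟨0, measure_ne_top _ _⟩
  have hcover : ⋃ R : ℝ, closedBall x R = univ :=
    iUnion_eq_univ_iff.2 fun y => ⟨dist y x, mem_closedBall.2 le_rfl⟩
  rwa [← compl_iUnion, hcover, compl_univ, measure_empty] at h

theorem tendsto_edist_smul_cocompact {G X : Type*} [Group G] [TopologicalSpace G] [MulAction G X]
    [PseudoMetricSpace X] [ProperSpace X] [ProperSMul G X] (x₀ : X) :
    Tendsto (fun g : G => edist (g • x₀) x₀) (cocompact G) (𝓝 ⊤) := by
  have horbit : Tendsto (fun g : G => g • x₀) (cocompact G) (cocompact X) := by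
    refine hasBasis_cocompact.tendsto_right_iff.2 fun K hK => ?_
    have hcompact : IsCompact {g : G | g • x₀ ∈ K} := by
      simpa [smul_set_singleton] using
        ProperSMul.isCompact_setOfPred_inter_nonempty (G := G) (isCompact_singleton (x := x₀)) hK
    exact hcompact.compl_mem_cocompact
  simp only [edist_dist]
  exact ENNReal.tendsto_ofReal_atTop.comp ((tendsto_dist_right_cocompact_atTop x₀).comp horbit)

section Action

variable {G X : Type*} [Group G] [MulAction G X] [PseudoMetricSpace X]
  [MeasurableSpace X] [BorelSpace X] {p : ℝ} {μ ν : Measure X}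

theorem Wp_map_smul_le [ContinuousConstSMul G X] [SecondCountableTopology X] (hp : 1 ≤ p)
    (g h : G) : Wp p (μ.map (g • ·)) ν ≤
      (∫⁻ x, edist (g • x) (h • x) ^ p ∂μ) ^ (1 / p) + Wp p (μ.map (h • ·)) ν := by
  have hmeas (k : G) : Measurable (k • · : X → X) := (continuous_const_smul k).measurable
  have hcomp : (μ.map (h • ·)).map ((g * h⁻¹) • ·) = μ.map (g • ·) := by
    rw [Measure.map_map (hmeas _) (hmeas h)]
    congr 1
    ext x
    simp [smul_smul]
  have key := Wp_map_le (μ := μ.map (h • ·)) (ν := ν) hp (hmeas (g * h⁻¹))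
  rw [hcomp, lintegral_map (((hmeas _).edist measurable_id').pow_const p) (hmeas h)] at key
  simpa [smul_smul] using key

variable [TopologicalSpace G] [IsIsometricSMul G X] [ProperSpace X]

/-- On a ball of radius `R` the action of `g` is uniformly `r`-close to that of `h` for `g` near
`h`; outside, `d(g x, h x) ≤ 3 d(x, x₀)`. -/
lemma eventually_lintegral_edist_smul_rpow_le [ContinuousSMul G X] [IsProbabilityMeasure μ]
    (hp : 0 ≤ p) (h : G) (x₀ : X) {R : ℝ} {r : ℝ≥0∞} (hr : 0 < r) (hrR : r ≤ ENNReal.ofReal R) :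
    ∀ᶠ g in 𝓝 h, ∫⁻ x, edist (g • x) (h • x) ^ p ∂μ ≤
      r ^ p + 3 ^ p * ∫⁻ x in (closedBall x₀ R)ᶜ, edist x x₀ ^ p ∂μ := by
  set K := closedBall x₀ R
  have hK : MeasurableSet K := measurableSet_closedBall
  have hR : 0 ≤ R := (ENNReal.ofReal_pos.1 (hr.trans_le hrR)).le
  obtain ⟨V, hV, hVK⟩ := (isCompact_closedBall x₀ R).mem_uniformity_of_prod
    (f := fun (g : G) (x : X) => g • x) continuous_smul.continuousOn (mem_univ h)
    (edist_mem_uniformity hr)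
  rw [nhdsWithin_univ] at hV
  filter_upwards [hV] with g hg
  have hnear (x : X) (hx : x ∈ K) : edist (g • x) (h • x) ≤ r := (hVK g hg x hx).le
  have hfar (x : X) (hx : x ∈ Kᶜ) : edist (g • x) (h • x) ≤ 3 * edist x x₀ := by
    have hRx : ENNReal.ofReal R ≤ edist x x₀ := by
      rw [edist_dist]
      exact ENNReal.ofReal_le_ofReal (le_of_lt (by simpa [K] using hx))
    have hx₀ : edist (g • x₀) (h • x₀) ≤ edist x x₀ :=
      ((hnear x₀ (mem_closedBall_self hR)).trans hrR).trans hRx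
    calc edist (g • x) (h • x)
        ≤ edist (g • x) (g • x₀) + edist (g • x₀) (h • x₀) + edist (h • x₀) (h • x) :=
          edist_triangle4 _ _ _ _
      _ ≤ edist x x₀ + edist x x₀ + edist x x₀ := by
          rw [edist_smul_left, edist_smul_left, edist_comm x₀]
          gcongr
      _ = 3 * edist x x₀ := by ring
  calc ∫⁻ x, edist (g • x) (h • x) ^ p ∂μ
      = ∫⁻ x in K, edist (g • x) (h • x) ^ p ∂μ + ∫⁻ x in Kᶜ, edist (g • x) (h • x) ^ p ∂μ :=
        (lintegral_add_compl _ hK).symm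
    _ ≤ ∫⁻ _ in K, r ^ p ∂μ + ∫⁻ x in Kᶜ, 3 ^ p * edist x x₀ ^ p ∂μ := by
        refine add_le_add (setLIntegral_mono' hK fun x hx => ENNReal.rpow_le_rpow (hnear x hx) hp)
          (setLIntegral_mono' hK.compl fun x hx => ?_)
        rw [← ENNReal.mul_rpow_of_nonneg _ _ hp]
        exact ENNReal.rpow_le_rpow (hfar x hx) hp
    _ ≤ r ^ p + 3 ^ p * ∫⁻ x in Kᶜ, edist x x₀ ^ p ∂μ := by
        rw [setLIntegral_const, lintegral_const_mul _ (measurable_edist_left.pow_const p)]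
        gcongr
        exact mul_le_of_le_one_right' prob_le_one

theorem tendsto_lintegral_edist_smul_rpow [ContinuousSMul G X] [IsProbabilityMeasure μ]
    (hp : 0 < p) (hμ : HasFinitePMoment p μ) (h : G) :
    Tendsto (fun g : G => ∫⁻ x, edist (g • x) (h • x) ^ p ∂μ) (𝓝 h) (𝓝 0) := by
  obtain ⟨x₀, hx₀⟩ := hμ
  have htail : Tendsto (fun R : ℝ => 3 ^ p * ∫⁻ x in (closedBall x₀ R)ᶜ, edist x x₀ ^ p ∂μ)
      atTop (𝓝 0) := by
    simpa using ENNReal.Tendsto.const_mul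
      (tendsto_setLIntegral_zero hx₀ (tendsto_measure_compl_closedBall μ x₀))
      (Or.inr (ENNReal.rpow_ne_top_of_nonneg hp.le (by simp)))
  rw [ENNReal.tendsto_nhds_zero]
  intro ε hε
  have hε2 : 0 < ε / 2 := ENNReal.half_pos hε.ne'
  obtain ⟨R, hRtail, hR⟩ :=
    ((htail.eventually (eventually_le_nhds hε2)).and (eventually_gt_atTop 0)).exists
  set r := min (ENNReal.ofReal R) ((ε / 2) ^ (1 / p))
  have hr : 0 < r :=
    lt_min (ENNReal.ofReal_pos.2 hR) (ENNReal.rpow_pos_of_nonneg hε2 (by positivity))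
  have hrp : r ^ p ≤ ε / 2 :=
    calc r ^ p ≤ ((ε / 2) ^ (1 / p)) ^ p := ENNReal.rpow_le_rpow (min_le_right _ _) hp.le
      _ = ε / 2 := by rw [← ENNReal.rpow_mul, one_div_mul_cancel hp.ne', ENNReal.rpow_one]
  filter_upwards [eventually_lintegral_edist_smul_rpow_le (μ := μ) hp.le h x₀ hr (min_le_left _ _)]
    with g hg
  calc _ ≤ _ := hg
    _ ≤ ε / 2 + ε / 2 := add_le_add hrp hRtail
    _ = ε := ENNReal.add_halves ε

theorem continuous_Wp_map_smul [ContinuousSMul G X] [IsProbabilityMeasure μ] (ν : Measure X)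
    (hp : 1 ≤ p) (hμ : HasFinitePMoment p μ) :
    Continuous fun g : G => Wp p (μ.map (g • ·)) ν := by
  refine continuous_iff_continuousAt.2 fun h => ?_
  set D := fun g : G => (∫⁻ x, edist (g • x) (h • x) ^ p ∂μ) ^ (1 / p)
  have hD : Tendsto D (𝓝 h) (𝓝 0) := by
    have := (ENNReal.continuous_rpow_const (y := 1 / p)).tendsto 0
    rw [ENNReal.zero_rpow_of_pos (by positivity)] at this
    exact this.comp (tendsto_lintegral_edist_smul_rpow (by linarith) hμ h)
  refine tendsto_of_tendsto_of_tendsto_of_le_of_le (g := fun g => Wp p (μ.map (h • ·)) ν - D g)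
    (h := fun g => D g + Wp p (μ.map (h • ·)) ν) ?_ ?_ (fun g => ?_) (Wp_map_smul_le hp · h)
  · simpa using ENNReal.Tendsto.sub tendsto_const_nhds hD (Or.inr ENNReal.zero_ne_top)
  · simpa using hD.add tendsto_const_nhds
  · refine tsub_le_iff_right.2 ?_
    simpa only [D, edist_comm, add_comm] using Wp_map_smul_le (μ := μ) (ν := ν) hp h g

theorem tendsto_Wp_map_smul_cocompact [ProperSMul G X] [IsProbabilityMeasure μ]
    [IsProbabilityMeasure ν] (hp : 0 < p) :
    Tendsto (fun g : G => Wp p (μ.map (g • ·)) ν) (cocompact G) (𝓝 ⊤) := by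
  obtain ⟨x₀⟩ := nonempty_of_isProbabilityMeasure μ
  obtain ⟨R, hR⟩ := (((tendsto_measure_compl_closedBall μ x₀).add
    (tendsto_measure_compl_closedBall ν x₀)).eventually
      (eventually_lt_nhds (by simp : (0 : ℝ≥0∞) + 0 < 1))).exists
  set c := (1 - (μ (closedBall x₀ R)ᶜ + ν (closedBall x₀ R)ᶜ)) ^ (1 / p)
  have hc : c ≠ 0 := (ENNReal.rpow_pos_of_nonneg (tsub_pos_of_lt hR) (by positivity)).ne'
  have hbound (g : G) :
      (edist (g • x₀) x₀ - 2 * ENNReal.ofReal R) * c ≤ Wp p (μ.map (g • ·)) ν := by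
    have hfar : ∀ x ∈ closedBall (g • x₀) R, ∀ y ∈ closedBall x₀ R,
        edist (g • x₀) x₀ - 2 * ENNReal.ofReal R ≤ edist x y := by
      intro x hx y hy
      rw [mem_closedBall'] at hx
      rw [mem_closedBall] at hy
      refine tsub_le_iff_right.2 ?_
      calc edist (g • x₀) x₀ ≤ edist (g • x₀) x + edist x y + edist y x₀ := edist_triangle4 _ _ _ _
        _ ≤ ENNReal.ofReal R + edist x y + ENNReal.ofReal R := by
            rw [edist_dist, edist_dist y]
            gcongr
        _ = edist x y + 2 * ENNReal.ofReal R := by ring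
    have hball : μ.map (g • ·) (closedBall (g • x₀) R)ᶜ = μ (closedBall x₀ R)ᶜ := by
      rw [Measure.map_apply (continuous_const_smul g).measurable measurableSet_closedBall.compl,
        preimage_compl, (isometry_smul X g).preimage_closedBall]
    have := mul_rpow_le_Wp (μ := μ.map (g • ·)) (ν := ν) measurableSet_closedBall
      measurableSet_closedBall hfar hp
    rwa [hball] at this
  refine tendsto_nhds_top_mono ?_ (Eventually.of_forall hbound)
  have h2R : 2 * ENNReal.ofReal R ≠ ⊤ := by finiteness
  have := ENNReal.Tendsto.mul_const (b := c)
    (ENNReal.Tendsto.sub (tendsto_edist_smul_cocompact (G := G) x₀) tendsto_const_nhds (Or.inr h2R))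
    (Or.inl (by simp [h2R]))
  rwa [ENNReal.top_sub h2R, ENNReal.top_mul hc] at this

end Action

theorem shape_distance_minimizer_exists_general {X : Type*} [MetricSpace X]
    [ProperSpace X] [MeasurableSpace X] [BorelSpace X]
    (G : Type*) [Group G] [TopologicalSpace G]
    [MulAction G X]
    (hiso : ∀ g : G, Isometry (fun x : X => g • x))
    (hproper : IsProperMap (fun q : G × X => (q.1 • q.2, q.2)))
    (p : ℝ) (hp : 1 ≤ p)
    (μ ν : Measure X)
    (hμ : IsProbabilityMeasure μ) (hμp : HasFinitePMoment p μ)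
    (hν : IsProbabilityMeasure ν) (hνp : HasFinitePMoment p ν) :
    ∃ g₀ : G, Wp p (μ.map (fun x : X => g₀ • x)) ν =
      ⨅ g : G, Wp p (μ.map (fun x : X => g • x)) ν := by
  have : IsIsometricSMul G X := ⟨hiso⟩
  have : ProperSMul G X := ⟨hproper⟩
  have hfinite : Wp p (μ.map fun x : X => (1 : G) • x) ν ≠ ⊤ := by
    simpa using Wp_ne_top hp hμp hνp
  obtain ⟨g₀, hg₀⟩ := (continuous_Wp_map_smul ν hp hμp).exists_forall_le' (1 : G)
    ((tendsto_Wp_map_smul_cocompact (by linarith)).eventually (eventually_ge_nhds hfinite.lt_top))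
  exact ⟨g₀, le_antisymm (le_iInf hg₀) (iInf_le _ g₀)⟩

/-- Existence of a minimizer for the shape-distance problem: if `X` is a proper Polish
metric space and `G` a topological group acting continuously, properly and by isometries
on `X`, then for all `μ, ν ∈ P_p(X)` the infimum `inf_{g ∈ G} W_p(g_#μ, ν)` is attained. -/
theorem shape_distance_minimizer_exists {X : Type*} [MetricSpace X] [CompleteSpace X]
    [TopologicalSpace.SeparableSpace X] [ProperSpace X] [MeasurableSpace X] [BorelSpace X]
    (G : Type*) [Group G] [TopologicalSpace G] [IsTopologicalGroup G]
    [MulAction G X] [ContinuousSMul G X]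
    (hiso : ∀ g : G, Isometry (fun x : X => g • x))
    (hproper : IsProperMap (fun q : G × X => (q.1 • q.2, q.2)))
    (p : ℝ) (hp : 1 ≤ p)
    (μ ν : Measure X)
    (hμ : IsProbabilityMeasure μ) (hμp : HasFinitePMoment p μ)
    (hν : IsProbabilityMeasure ν) (hνp : HasFinitePMoment p ν) :
    ∃ g₀ : G, Wp p (μ.map (fun x : X => g₀ • x)) ν =
      ⨅ g : G, Wp p (μ.map (fun x : X => g • x)) ν :=
  shape_distance_minimizer_exists_general G hiso hproper p hp μ ν hμ hμp hν hνp

end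
end

section
/- Let (X,d) be a Polish metric space, p ≥ 1, and G a group of surjective isometries of X; write W_p for the p-th Wasserstein distance and D_p(μ,ν) := inf_{g ∈ G} W_p(g_#μ, ν) for the shape distance. Let (μ_t)_{t ∈ [0,1]} be a constant-speed geodesic in the p-th Wasserstein space (i.e. W_p(μ_s, μ_t) = |s − t| · W_p(μ_0, μ_1) for all s, t ∈ [0,1]) such that D_p(μ_0, μ_1) = W_p(μ_0, μ_1) ≠ 0. Then the projected curve is a constant-speed geodesic for the shape distance: D_p(μ_s, μ_t) = |s − t| · D_p(μ_0, μ_1) for all s, t ∈ [0,1]. -/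
open MeasureTheory ENNReal Set

noncomputable section

/-- Shape distance for a subgroup `G` of the isometry group. -/
def Dp {X : Type*} [MeasurableSpace X] [MetricSpace X] (G : Subgroup (X ≃ᵢ X)) (p : ℝ)
    (μ ν : Measure X) : ℝ≥0∞ :=
  ⨅ g : G, Wp p (μ.map ((g : X ≃ᵢ X) : X → X)) ν

/-! The group acts by isometries, so `W_p(g_#μ, g_#ν) = W_p(μ, ν)`. For `s ≤ t`, `g ∈ G` and
`W := W_p(μ_0, μ_1) = D_p(μ_0, μ_1)`, the triangle inequality for `W_p` along
`g_#μ_0, g_#μ_s, μ_t, μ_1` gives `W ≤ s W + W_p(g_#μ_s, μ_t) + (1 - t) W`; the infimum over `g`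
yields `(t - s) W ≤ D_p(μ_s, μ_t)`, and `D_p ≤ W_p` gives the reverse inequality. The triangle
inequality for `W_p` comes from gluing two couplings along their common marginal (disintegration
on the standard Borel space `X`) and Minkowski's inequality; `W` is finite, so that it can be
cancelled, because the `μ_t` have finite `p`-th moments. -/

def transportCost {X : Type*} [MeasurableSpace X] [PseudoEMetricSpace X] (p : ℝ)
    (π : Measure (X × X)) : ℝ≥0∞ :=
  ∫⁻ z, edist z.1 z.2 ^ p ∂π

section Couplings

variable {X Y : Type*} [MeasurableSpace X] [MeasurableSpace Y]

theorem map_swap_mem_adm {μ ν : Measure X} {π : Measure (X × X)} (hπ : π ∈ Adm μ ν) :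
    π.map Prod.swap ∈ Adm ν μ := by
  obtain ⟨hP, rfl, rfl⟩ := hπ
  exact ⟨Measure.isProbabilityMeasure_map measurable_swap.aemeasurable,
    by rw [Measure.map_map measurable_fst measurable_swap]; rfl,
    by rw [Measure.map_map measurable_snd measurable_swap]; rfl⟩

theorem map_prodMap_mem_adm {μ ν : Measure X} {π : Measure (X × X)} (hπ : π ∈ Adm μ ν) {g : X → Y}
    (hg : Measurable g) : π.map (Prod.map g g) ∈ Adm (μ.map g) (ν.map g) := by
  obtain ⟨hP, rfl, rfl⟩ := hπ
  refine ⟨Measure.isProbabilityMeasure_map (hg.prodMap hg).aemeasurable, ?_, ?_⟩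
  · rw [Measure.map_map measurable_fst (hg.prodMap hg), Measure.map_map hg measurable_fst]; rfl
  · rw [Measure.map_map measurable_snd (hg.prodMap hg), Measure.map_map hg measurable_snd]; rfl

theorem map_prodMk_const_mem_adm (μ : Measure X) [IsProbabilityMeasure μ] (x : X) :
    μ.map (fun y ↦ (y, x)) ∈ Adm μ (Measure.dirac x) := by
  refine ⟨Measure.isProbabilityMeasure_map measurable_prodMk_right.aemeasurable, ?_, ?_⟩
  · rw [Measure.map_map measurable_fst measurable_prodMk_right]; exact Measure.map_id
  · rw [Measure.map_map measurable_snd measurable_prodMk_right, Function.comp_def,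
      Measure.map_const, measure_univ, one_smul]

end Couplings

open ProbabilityTheory in
theorem exists_gluing {α β γ : Type*} [MeasurableSpace α] [MeasurableSpace β]
    [MeasurableSpace γ] [StandardBorelSpace β] [Nonempty β] [StandardBorelSpace γ] [Nonempty γ]
    (ρ₁ : Measure (α × β)) (ρ₂ : Measure (α × γ)) [IsProbabilityMeasure ρ₁]
    [IsProbabilityMeasure ρ₂] (h : ρ₁.fst = ρ₂.fst) :
    ∃ m : Measure (α × β × γ), IsProbabilityMeasure m ∧
      m.map (Prod.map id Prod.fst) = ρ₁ ∧ m.map (Prod.map id Prod.snd) = ρ₂ := by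
  refine ⟨ρ₁.fst ⊗ₘ (ρ₁.condKernel ×ₖ ρ₂.condKernel), inferInstance, ?_, ?_⟩
  · rw [← Measure.compProd_map measurable_fst, ← Kernel.fst_eq, Kernel.fst_prod,
      ρ₁.disintegrate]
  · rw [← Measure.compProd_map measurable_snd, ← Kernel.snd_eq, Kernel.snd_prod, h,
      ρ₂.disintegrate]

section Wasserstein

variable {X Y : Type*} [MeasurableSpace X] [PseudoEMetricSpace X] [MeasurableSpace Y]
  [PseudoEMetricSpace Y] {p : ℝ}

theorem wp_le_of_mem_adm (hp : 0 ≤ p) {μ ν : Measure X} {π : Measure (X × X)}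
    (hπ : π ∈ Adm μ ν) : Wp p μ ν ≤ transportCost p π ^ (1 / p) :=
  ENNReal.rpow_le_rpow (iInf₂_le π hπ) (by positivity)

theorem wp_eq_biInf (hp : 0 < p) (μ ν : Measure X) :
    Wp p μ ν = ⨅ π ∈ Adm μ ν, transportCost p π ^ (1 / p) :=
  (ENNReal.orderIsoRpow (1 / p) (by positivity)).map_iInf₂ _

variable [BorelSpace X] [SecondCountableTopology X]

theorem transportCost_map {α : Type*} [MeasurableSpace α] {f : α → X × X} (hf : Measurable f)
    (ρ : Measure α) : transportCost p (ρ.map f) = ∫⁻ a, edist (f a).1 (f a).2 ^ p ∂ρ :=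
  lintegral_map ((continuous_fst.edist continuous_snd).measurable.pow_const p) hf

theorem transportCost_map_swap (π : Measure (X × X)) :
    transportCost p (π.map Prod.swap) = transportCost p π := by
  simp_rw [transportCost_map measurable_swap, Prod.fst_swap, Prod.snd_swap, edist_comm]
  rfl

theorem wp_comm (μ ν : Measure X) : Wp p μ ν = Wp p ν μ := by
  have key : ∀ μ ν : Measure X,
      ⨅ π ∈ Adm ν μ, transportCost p π ≤ ⨅ π ∈ Adm μ ν, transportCost p π := fun μ ν ↦
    le_iInf₂ fun π hπ ↦ iInf₂_le_of_le _ (map_swap_mem_adm hπ) (transportCost_map_swap π).le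
  exact congrArg (· ^ (1 / p)) (le_antisymm (key ν μ) (key μ ν))

theorem wp_dirac_le (hp : 0 ≤ p) (μ : Measure X) [IsProbabilityMeasure μ] (x : X) :
    Wp p μ (Measure.dirac x) ≤ (∫⁻ y, edist y x ^ p ∂μ) ^ (1 / p) := by
  refine (wp_le_of_mem_adm hp (map_prodMk_const_mem_adm μ x)).trans_eq ?_
  rw [transportCost_map measurable_prodMk_right]

variable [BorelSpace Y]

theorem transportCost_map_prodMap {g : Y → X} (hg : Isometry g) (π : Measure (Y × Y)) :
    transportCost p (π.map (Prod.map g g)) = transportCost p π := by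
  simp_rw [transportCost_map (hg.continuous.measurable.prodMap hg.continuous.measurable),
    Prod.map_fst, Prod.map_snd, hg.edist_eq]
  rfl

theorem iInf_transportCost_map_le {g : Y → X} (hg : Isometry g) (μ ν : Measure Y) :
    ⨅ π ∈ Adm (μ.map g) (ν.map g), transportCost p π ≤ ⨅ π ∈ Adm μ ν, transportCost p π :=
  le_iInf₂ fun π hπ ↦ iInf₂_le_of_le _ (map_prodMap_mem_adm hπ hg.continuous.measurable)
    (transportCost_map_prodMap hg π).le

variable [SecondCountableTopology Y]

theorem wp_map_isometryEquiv (g : X ≃ᵢ Y) (μ ν : Measure X) :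
    Wp p (μ.map g) (ν.map g) = Wp p μ ν := by
  have hsymm (μ : Measure X) : (μ.map g).map g.symm = μ :=
    g.toHomeomorph.toMeasurableEquiv.map_symm_map
  refine congrArg (· ^ (1 / p)) (le_antisymm (iInf_transportCost_map_le g.isometry μ ν) ?_)
  have := iInf_transportCost_map_le (p := p) g.symm.isometry (μ.map g) (ν.map g)
  rwa [hsymm, hsymm] at this

end Wasserstein

section StandardBorel

variable {X : Type*} [MeasurableSpace X] [PseudoEMetricSpace X] [BorelSpace X]
  [SecondCountableTopology X] [StandardBorelSpace X] {p : ℝ}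

theorem wp_le_add_of_mem_adm (hp : 1 ≤ p) {μ κ ν : Measure X} {π₁ π₂ : Measure (X × X)}
    (hπ₁ : π₁ ∈ Adm μ κ) (hπ₂ : π₂ ∈ Adm κ ν) :
    Wp p μ ν ≤ transportCost p π₁ ^ (1 / p) + transportCost p π₂ ^ (1 / p) := by
  have hσ := map_swap_mem_adm hπ₁
  have := hσ.1
  have := hπ₂.1
  have : Nonempty X := (nonempty_of_isProbabilityMeasure π₂).map Prod.fst
  -- `m` is the law of a triple `(y, x, z)` with `(x, y) ∼ π₁` and `(y, z) ∼ π₂`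
  obtain ⟨m, hm, hm₁, hm₂⟩ := exists_gluing _ π₂ (hσ.2.1.trans hπ₂.2.1.symm)
  have hmem : m.map Prod.snd ∈ Adm μ ν := by
    refine ⟨Measure.isProbabilityMeasure_map measurable_snd.aemeasurable, ?_, ?_⟩
    · rw [← hσ.2.2, ← hm₁, Measure.map_map measurable_fst measurable_snd,
        Measure.map_map measurable_snd (by fun_prop)]
      rfl
    · rw [← hπ₂.2.2, ← hm₂, Measure.map_map measurable_snd measurable_snd,
        Measure.map_map measurable_snd (by fun_prop)]
      rfl
  have hcost₁ : ∫⁻ w, edist w.2.1 w.1 ^ p ∂m = transportCost p π₁ := by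
    rw [← transportCost_map_swap π₁, ← hm₁,
      transportCost_map (measurable_id.prodMap measurable_fst)]
    exact lintegral_congr fun w ↦ by rw [edist_comm]; rfl
  have hcost₂ : ∫⁻ w, edist w.1 w.2.2 ^ p ∂m = transportCost p π₂ := by
    rw [← hm₂, transportCost_map (measurable_id.prodMap measurable_snd)]
    rfl
  calc Wp p μ ν ≤ transportCost p (m.map Prod.snd) ^ (1 / p) :=
        wp_le_of_mem_adm (by positivity) hmem
    _ = (∫⁻ w, edist w.2.1 w.2.2 ^ p ∂m) ^ (1 / p) := by rw [transportCost_map measurable_snd]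
    _ ≤ (∫⁻ w, (fun w ↦ edist w.2.1 w.1 + edist w.1 w.2.2) w ^ p ∂m) ^ (1 / p) := by
        gcongr with w
        exact edist_triangle _ _ _
    _ ≤ (∫⁻ w, edist w.2.1 w.1 ^ p ∂m) ^ (1 / p) + (∫⁻ w, edist w.1 w.2.2 ^ p ∂m) ^ (1 / p) :=
        ENNReal.lintegral_Lp_add_le (by fun_prop) (by fun_prop) hp
    _ = _ := by rw [hcost₁, hcost₂]

theorem wp_triangle (hp : 1 ≤ p) (μ κ ν : Measure X) : Wp p μ ν ≤ Wp p μ κ + Wp p κ ν := by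
  rw [wp_eq_biInf (by positivity) μ κ, wp_eq_biInf (by positivity) κ ν]
  exact ENNReal.le_iInf₂_add_iInf₂ fun π₁ hπ₁ π₂ hπ₂ ↦ wp_le_add_of_mem_adm hp hπ₁ hπ₂

end StandardBorel

theorem wp_ne_top {X : Type*} [MeasurableSpace X] [PseudoMetricSpace X] [BorelSpace X]
    [SecondCountableTopology X] [StandardBorelSpace X] {p : ℝ} (hp : 1 ≤ p) {μ ν : Measure X}
    [IsProbabilityMeasure μ] [IsProbabilityMeasure ν] (hμ : HasFinitePMoment p μ)
    (hν : HasFinitePMoment p ν) :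
    Wp p μ ν ≠ ⊤ := by
  obtain ⟨x, hx⟩ := hμ
  obtain ⟨y, hy⟩ := hν
  have hp₀ : 0 ≤ p := by linarith
  have hdirac (ρ : Measure X) [IsProbabilityMeasure ρ] (z : X) (h : ∫⁻ w, edist w z ^ p ∂ρ ≠ ⊤) :
      Wp p ρ (Measure.dirac z) ≠ ⊤ :=
    ne_top_of_le_ne_top (ENNReal.rpow_ne_top_of_nonneg (by positivity) h) (wp_dirac_le hp₀ ρ z)
  have hxy : Wp p (Measure.dirac x) (Measure.dirac y) ≠ ⊤ := hdirac _ y <| by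
    rw [lintegral_dirac' x (by fun_prop)]
    exact ENNReal.rpow_ne_top_of_nonneg hp₀ (edist_ne_top x y)
  have hyν : Wp p (Measure.dirac y) ν ≠ ⊤ := by rw [wp_comm]; exact hdirac ν y hy
  have hle : Wp p μ ν ≤ Wp p μ (Measure.dirac x) +
      (Wp p (Measure.dirac x) (Measure.dirac y) + Wp p (Measure.dirac y) ν) :=
    (wp_triangle hp _ _ _).trans (by gcongr; exact wp_triangle hp _ _ _)
  exact ne_top_of_le_ne_top
    (ENNReal.add_ne_top.2 ⟨hdirac μ x hx, ENNReal.add_ne_top.2 ⟨hxy, hyν⟩⟩) hle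

section Shape

variable {X : Type*} [MeasurableSpace X] [MetricSpace X] {p : ℝ}

theorem dp_le_wp (G : Subgroup (X ≃ᵢ X)) (μ ν : Measure X) : Dp G p μ ν ≤ Wp p μ ν :=
  iInf_le_of_le 1 (by simp)

variable [BorelSpace X] [SecondCountableTopology X]

theorem dp_comm (G : Subgroup (X ≃ᵢ X)) (μ ν : Measure X) : Dp G p μ ν = Dp G p ν μ := by
  have key : ∀ μ ν : Measure X, Dp G p ν μ ≤ Dp G p μ ν := fun μ ν ↦ le_iInf fun g ↦ by
    have hcancel : (ν.map (g : X ≃ᵢ X).symm).map (g : X ≃ᵢ X) = ν :=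
      (g : X ≃ᵢ X).toHomeomorph.toMeasurableEquiv.map_map_symm
    calc Dp G p ν μ ≤ Wp p (ν.map (g : X ≃ᵢ X).symm) μ := iInf_le_of_le g⁻¹ le_rfl
      _ = Wp p (μ.map (g : X ≃ᵢ X)) ν := by
        rw [wp_comm, ← wp_map_isometryEquiv (g : X ≃ᵢ X), hcancel]
  exact le_antisymm (key ν μ) (key μ ν)

theorem dp_le_wp_add_dp_add_wp [StandardBorelSpace X] (hp : 1 ≤ p) (G : Subgroup (X ≃ᵢ X))
    (μ₀ μ ν μ₁ : Measure X) : Dp G p μ₀ μ₁ ≤ Wp p μ₀ μ + Dp G p μ ν + Wp p ν μ₁ := by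
  have key (g : G) : Dp G p μ₀ μ₁ ≤ Wp p μ₀ μ + Wp p (μ.map (g : X ≃ᵢ X)) ν + Wp p ν μ₁ :=
    calc Dp G p μ₀ μ₁ ≤ Wp p (μ₀.map (g : X ≃ᵢ X)) μ₁ := iInf_le _ g
      _ ≤ Wp p (μ₀.map (g : X ≃ᵢ X)) (μ.map (g : X ≃ᵢ X)) + Wp p (μ.map (g : X ≃ᵢ X)) ν
          + Wp p ν μ₁ := (wp_triangle hp _ _ _).trans (by gcongr; exact wp_triangle hp _ _ _)
      _ = _ := by rw [wp_map_isometryEquiv]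
  calc Dp G p μ₀ μ₁ ≤ ⨅ g : G, (Wp p μ₀ μ + Wp p (μ.map (g : X ≃ᵢ X)) ν + Wp p ν μ₁) :=
        le_iInf key
    _ = _ := by rw [Dp, ENNReal.add_iInf, ENNReal.iInf_add]

end Shape

theorem ENNReal.ofReal_sub_mul_le_of_le_add {a b : ℝ≥0∞} (ha : a ≠ ⊤) {s t : ℝ} (hs : 0 ≤ s)
    (hst : s ≤ t) (ht : t ≤ 1) (h : a ≤ ENNReal.ofReal s * a + b + ENNReal.ofReal (1 - t) * a) :
    ENNReal.ofReal (t - s) * a ≤ b := by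
  have hsplit : a = ENNReal.ofReal s * a + ENNReal.ofReal (t - s) * a
      + ENNReal.ofReal (1 - t) * a := by
    rw [← add_mul, ← add_mul, ← ENNReal.ofReal_add hs (by linarith),
      ← ENNReal.ofReal_add (by linarith) (by linarith)]
    ring_nf
    rw [ENNReal.ofReal_one, one_mul]
  have h' := hsplit.symm.trans_le h
  rwa [ENNReal.add_le_add_iff_right (mul_ne_top ofReal_ne_top ha),
    ENNReal.add_le_add_iff_left (mul_ne_top ofReal_ne_top ha)] at h'

theorem projection_of_geodesic_is_geodesic_general {X : Type*} [MetricSpace X] [CompleteSpace X]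
    [TopologicalSpace.SeparableSpace X] [MeasurableSpace X] [BorelSpace X]
    (p : ℝ) (hp : 1 ≤ p) (G : Subgroup (X ≃ᵢ X))
    (μ : ℝ → Measure X)
    (hprob : ∀ t ∈ Icc (0:ℝ) 1, IsProbabilityMeasure (μ t) ∧ HasFinitePMoment p (μ t))
    (hgeo : ∀ s ∈ Icc (0:ℝ) 1, ∀ t ∈ Icc (0:ℝ) 1,
      Wp p (μ s) (μ t) = ENNReal.ofReal |s - t| * Wp p (μ 0) (μ 1))
    (hD : Dp G p (μ 0) (μ 1) = Wp p (μ 0) (μ 1)) :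
    ∀ s ∈ Icc (0:ℝ) 1, ∀ t ∈ Icc (0:ℝ) 1,
      Dp G p (μ s) (μ t) = ENNReal.ofReal |s - t| * Dp G p (μ 0) (μ 1) := by
  have h₀ : (0 : ℝ) ∈ Icc (0 : ℝ) 1 := left_mem_Icc.2 zero_le_one
  have h₁ : (1 : ℝ) ∈ Icc (0 : ℝ) 1 := right_mem_Icc.2 zero_le_one
  have := (hprob 0 h₀).1
  have := (hprob 1 h₁).1
  have hW : Wp p (μ 0) (μ 1) ≠ ⊤ := wp_ne_top hp (hprob 0 h₀).2 (hprob 1 h₁).2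
  intro s hs t ht
  wlog hst : s ≤ t generalizing s t
  · rw [dp_comm, this t ht s hs (le_of_not_ge hst), abs_sub_comm]
  rw [hD, abs_sub_comm, abs_of_nonneg (sub_nonneg.2 hst)]
  refine le_antisymm ?_ (ENNReal.ofReal_sub_mul_le_of_le_add hW hs.1 hst ht.2 ?_)
  · calc Dp G p (μ s) (μ t) ≤ Wp p (μ s) (μ t) := dp_le_wp G _ _
      _ = _ := by rw [hgeo s hs t ht, abs_sub_comm, abs_of_nonneg (sub_nonneg.2 hst)]
  · calc Wp p (μ 0) (μ 1) = Dp G p (μ 0) (μ 1) := hD.symm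
      _ ≤ Wp p (μ 0) (μ s) + Dp G p (μ s) (μ t) + Wp p (μ t) (μ 1) :=
        dp_le_wp_add_dp_add_wp hp G _ _ _ _
      _ = _ := by
        rw [hgeo 0 h₀ s hs, hgeo t ht 1 h₁, zero_sub, abs_neg, abs_of_nonneg hs.1, abs_sub_comm,
          abs_of_nonneg (sub_nonneg.2 ht.2)]

/-- Let `(μ_t)` be a constant-speed geodesic in the `p`-th Wasserstein space of a Polish
metric space `X` such that `D_p(μ_0,μ_1) = W_p(μ_0,μ_1) ≠ 0`. Then the projected curve is a
constant-speed geodesic for the shape distance: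
`D_p(μ_s,μ_t) = |s − t| · D_p(μ_0,μ_1)` for all `s, t ∈ [0,1]`. -/
theorem projection_of_geodesic_is_geodesic {X : Type*} [MetricSpace X] [CompleteSpace X]
    [TopologicalSpace.SeparableSpace X] [MeasurableSpace X] [BorelSpace X]
    (p : ℝ) (hp : 1 ≤ p) (G : Subgroup (X ≃ᵢ X))
    (μ : ℝ → Measure X)
    (hprob : ∀ t ∈ Icc (0:ℝ) 1, IsProbabilityMeasure (μ t) ∧ HasFinitePMoment p (μ t))
    (hgeo : ∀ s ∈ Icc (0:ℝ) 1, ∀ t ∈ Icc (0:ℝ) 1,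
      Wp p (μ s) (μ t) = ENNReal.ofReal |s - t| * Wp p (μ 0) (μ 1))
    (hne : μ 0 ≠ μ 1)
    (hD : Dp G p (μ 0) (μ 1) = Wp p (μ 0) (μ 1))
    (hD0 : Dp G p (μ 0) (μ 1) ≠ 0) :
    ∀ s ∈ Icc (0:ℝ) 1, ∀ t ∈ Icc (0:ℝ) 1,
      Dp G p (μ s) (μ t) = ENNReal.ofReal |s - t| * Dp G p (μ 0) (μ 1) :=
  projection_of_geodesic_is_geodesic_general p hp G μ hprob hgeo hD

end
end
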